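/- Let X1, X2 be iid St. Petersburg lotteries (P(X = 2^k) = 2^{−k} for k ∈ ℕ). Then X1 ≤_st (X1 + X2)/2. -/

import Mathlib

open MeasureTheory ProbabilityTheory Real Finset

noncomputable section

variable {Ω : Type*} [MeasurableSpace Ω]

/-- `X ~ Pareto(α)` : cdf `1 - x^(-α)` for `x ≥ 1`. -/
def IsPareto (P : Measure Ω) (α : ℝ) (X : Ω → ℝ) : Prop :=
  Measurable X ∧ (∀ x : ℝ, 1 ≤ x → P {ω | x < X ω} = ENNReal.ofReal (x ^ (-α))) ∧
    P {ω | X ω < 1} = 0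

/-- the increasing rearrangement of a vector -/
def sortedVec {n : ℕ} (f : Fin n → ℝ) : Fin n → ℝ := f ∘ Tuple.sort f

/-- `MajorizedBy θ η` : `θ ⪯ η`, i.e. equal sums and the sum of the `k` smallest
components of `θ` is at least that of `η` for each `k`. -/
def MajorizedBy {n : ℕ} (θ η : Fin n → ℝ) : Prop :=
  (∑ i, θ i = ∑ i, η i) ∧
  ∀ k : ℕ, k ≤ n →
    ∑ i ∈ Finset.univ.filter (fun i : Fin n => (i : ℕ) < k), sortedVec η i ≤
    ∑ i ∈ Finset.univ.filter (fun i : Fin n => (i : ℕ) < k), sortedVec θ i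

/-- St. Petersburg lottery: takes value `2^k` with probability `2^(-k)` for `k ≥ 1`. -/
def IsStPetersburg (P : Measure Ω) (X : Ω → ℝ) : Prop :=
  Measurable X ∧ ∀ k : ℕ, 1 ≤ k → P {ω | X ω = 2 ^ k} = ((2 : ENNReal) ^ k)⁻¹


/-! Almost surely `X₁ = 2^(i+1)` and `X₂ = 2^(j+1)`, and then `(X₁ + X₂) / 2 < 2^(n+1)` exactly when
`i < n, j ≤ n` or `i = n, j < n`. With `F n = P(X ≤ 2^n) = 1 - 2^(-n)`, independence gives this
event probability `F n * F (n+1) + 2^(-(n+1)) * F n = F n`, so the average and `X₁` have the same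
distribution function just below each `2^(n+1)`; an arbitrary `x` is rounded up to the least such
threshold above it, below which `X₁` takes only values `≤ x`. -/

lemma two_pow_add_two_pow_lt_two_pow_succ_iff {i j n : ℕ} :
    (2 : ℝ) ^ i + 2 ^ j < 2 ^ (n + 1) ↔ (i < n ∧ j ≤ n) ∨ (i = n ∧ j < n) := by
  have lt_iff {a b : ℕ} : (2 : ℝ) ^ a < 2 ^ b ↔ a < b := pow_lt_pow_iff_right₀ one_lt_two
  have le_iff {a b : ℕ} : (2 : ℝ) ^ a ≤ 2 ^ b ↔ a ≤ b := pow_le_pow_iff_right₀ one_lt_two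
  have hi_pos := pow_pos (two_pos (α := ℝ)) i
  have hj_pos := pow_pos (two_pos (α := ℝ)) j
  rw [pow_succ, mul_two]
  constructor
  · intro h
    have : ¬(i = n ∧ j = n) := by rintro ⟨rfl, rfl⟩; exact lt_irrefl _ h
    have : i < n + 1 := lt_iff.1 (by rw [pow_succ]; linarith)
    have : j < n + 1 := lt_iff.1 (by rw [pow_succ]; linarith)
    omega
  · rintro (⟨hi, hj⟩ | ⟨rfl, hj⟩)
    · exact add_lt_add_of_lt_of_le (lt_iff.2 hi) (le_iff.2 hj)
    · exact add_lt_add_right (lt_iff.2 hj) _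

lemma ENNReal.tsum_inv_two_pow_add_succ (n : ℕ) :
    ∑' k : ℕ, ((2 : ENNReal) ^ (n + k + 1))⁻¹ = (2 ^ n)⁻¹ := by
  simp_rw [ENNReal.inv_pow, add_assoc, pow_add _ n, ENNReal.tsum_mul_left,
    ENNReal.tsum_geometric_add_one, ENNReal.one_sub_inv_two, inv_inv,
    ENNReal.inv_mul_cancel two_ne_zero ENNReal.ofNat_ne_top, mul_one]

namespace IsStPetersburg

variable {P : Measure Ω} {X : Ω → ℝ}

lemma measure_iUnion_eq_two_pow_add_succ (h : IsStPetersburg P X) (n : ℕ) :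
    P (⋃ k : ℕ, X ⁻¹' {2 ^ (n + k + 1)}) = (2 ^ n)⁻¹ := by
  have hdisj : Pairwise (Function.onFun Disjoint fun k : ℕ => X ⁻¹' {(2 : ℝ) ^ (n + k + 1)}) :=
    fun k l hkl => (Set.disjoint_singleton.2 (by simpa using hkl)).preimage X
  rw [measure_iUnion hdisj fun k => h.1 (measurableSet_singleton _),
    ← ENNReal.tsum_inv_two_pow_add_succ n]
  exact tsum_congr fun k => h.2 _ (by omega)

variable [IsProbabilityMeasure P]

lemma ae_exists_eq_two_pow_succ (h : IsStPetersburg P X) :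
    ∀ᵐ ω ∂P, ∃ k : ℕ, X ω = 2 ^ (k + 1) := by
  have hset : {ω | ∃ k : ℕ, X ω = 2 ^ (k + 1)} = ⋃ k : ℕ, X ⁻¹' {2 ^ (0 + k + 1)} := by
    ext; simp
  have hmeas : MeasurableSet {ω | ∃ k : ℕ, X ω = 2 ^ (k + 1)} :=
    hset ▸ .iUnion fun k => h.1 (measurableSet_singleton _)
  rw [ae_iff_measure_eq hmeas.nullMeasurableSet, hset, h.measure_iUnion_eq_two_pow_add_succ,
    measure_univ, pow_zero, inv_one]

lemma measure_two_pow_lt (h : IsStPetersburg P X) (n : ℕ) :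
    P {ω | 2 ^ n < X ω} = (2 ^ n)⁻¹ := by
  rw [← h.measure_iUnion_eq_two_pow_add_succ n]
  refine measure_congr (Filter.eventuallyEq_set.2 ?_)
  filter_upwards [h.ae_exists_eq_two_pow_succ] with ω ⟨k, hk⟩
  simp only [Set.mem_iUnion, Set.mem_preimage, Set.mem_singleton_iff, hk,
    pow_lt_pow_iff_right₀ one_lt_two (M₀ := ℝ), pow_right_inj₀ (two_pos (α := ℝ)) (by norm_num)]
  exact ⟨fun hnk => ⟨k - n, by omega⟩, fun ⟨l, hl⟩ => by omega⟩

lemma measure_le_two_pow (h : IsStPetersburg P X) (n : ℕ) :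
    P {ω | X ω ≤ 2 ^ n} = 1 - (2 ^ n)⁻¹ := by
  rw [← h.measure_two_pow_lt n, ← prob_compl_eq_one_sub (measurableSet_lt measurable_const h.1)]
  simp only [Set.compl_ofPred, not_lt]

lemma measure_add_div_two_lt_two_pow_succ {X₁ X₂ : Ω → ℝ} (h₁ : IsStPetersburg P X₁)
    (h₂ : IsStPetersburg P X₂) (hind : IndepFun X₁ X₂ P) (n : ℕ) :
    P {ω | (X₁ ω + X₂ ω) / 2 < 2 ^ (n + 1)} = P {ω | X₁ ω ≤ 2 ^ n} := by
  have le_iff {a b : ℕ} : (2 : ℝ) ^ a ≤ 2 ^ b ↔ a ≤ b := pow_le_pow_iff_right₀ one_lt_two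
  have eq_iff {a b : ℕ} : (2 : ℝ) ^ a = 2 ^ b ↔ a = b := pow_right_inj₀ two_pos (by norm_num)
  set A := X₁ ⁻¹' Set.Iic (2 ^ n) ∩ X₂ ⁻¹' Set.Iic (2 ^ (n + 1))
  set B := X₁ ⁻¹' {2 ^ (n + 1)} ∩ X₂ ⁻¹' Set.Iic (2 ^ n)
  have hsplit : {ω | (X₁ ω + X₂ ω) / 2 < 2 ^ (n + 1)} =ᵐ[P] (A ∪ B : Set Ω) := by
    refine Filter.eventuallyEq_set.2 ?_
    filter_upwards [h₁.ae_exists_eq_two_pow_succ, h₂.ae_exists_eq_two_pow_succ]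
      with ω ⟨i, hi⟩ ⟨j, hj⟩
    have halve : ((2 : ℝ) ^ (i + 1) + 2 ^ (j + 1)) / 2 = 2 ^ i + 2 ^ j := by ring
    simp only [A, B, Set.mem_union, Set.mem_inter_iff, Set.mem_preimage, Set.mem_Iic,
      Set.mem_singleton_iff, hi, hj, halve,
      two_pow_add_two_pow_lt_two_pow_succ_iff, le_iff, eq_iff]
    omega
  have hdisj : Disjoint A B := Set.disjoint_left.2 fun ω hA hB => by
    have : X₁ ω ≤ 2 ^ n := hA.1
    rw [hB.1, le_iff] at this
    omega
  have hA : P A = (1 - (2 ^ n)⁻¹) * (1 - (2 ^ (n + 1))⁻¹) := by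
    rw [hind.measure_inter_preimage_eq_mul _ _ measurableSet_Iic measurableSet_Iic]
    exact congrArg₂ (· * ·) (h₁.measure_le_two_pow n) (h₂.measure_le_two_pow (n + 1))
  have hB : P B = (2 ^ (n + 1))⁻¹ * (1 - (2 ^ n)⁻¹) := by
    rw [hind.measure_inter_preimage_eq_mul _ _ (measurableSet_singleton _) measurableSet_Iic]
    exact congrArg₂ (· * ·) (h₁.2 (n + 1) (by omega)) (h₂.measure_le_two_pow n)
  have hinv_le_one : ((2 : ENNReal) ^ (n + 1))⁻¹ ≤ 1 :=
    ENNReal.inv_le_one.2 (one_le_pow₀ one_le_two)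
  have hB_meas : MeasurableSet B := (h₁.1 (measurableSet_singleton _)).inter (h₂.1 measurableSet_Iic)
  rw [measure_congr hsplit, measure_union hdisj hB_meas, hA, hB, mul_comm, ← add_mul,
    tsub_add_cancel_of_le hinv_le_one, one_mul, h₁.measure_le_two_pow]

end IsStPetersburg

theorem stmt_8 (P : Measure Ω) [IsProbabilityMeasure P]
    (X₁ X₂ : Ω → ℝ) (h₁ : IsStPetersburg P X₁) (h₂ : IsStPetersburg P X₂)
    (hind : IndepFun X₁ X₂ P) :
    ∀ x : ℝ, P {ω | (X₁ ω + X₂ ω) / 2 ≤ x} ≤ P {ω | X₁ ω ≤ x} := by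
  intro x
  have hx : ∃ n : ℕ, x < 2 ^ (n + 1) := by
    obtain ⟨n, hn⟩ := pow_unbounded_of_one_lt x one_lt_two
    exact ⟨n, hn.trans_le (pow_le_pow_right₀ one_le_two n.le_succ)⟩
  set n := Nat.find hx
  calc P {ω | (X₁ ω + X₂ ω) / 2 ≤ x}
      ≤ P {ω | (X₁ ω + X₂ ω) / 2 < 2 ^ (n + 1)} :=
        measure_mono fun ω hω => lt_of_le_of_lt hω (Nat.find_spec hx)
    _ = P {ω | X₁ ω ≤ 2 ^ n} := h₁.measure_add_div_two_lt_two_pow_succ h₂ hind n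
    _ ≤ P {ω | X₁ ω ≤ x} := measure_mono_ae <| by
        filter_upwards [h₁.ae_exists_eq_two_pow_succ] with ω ⟨k, hk⟩ (hle : X₁ ω ≤ 2 ^ n)
        rw [hk, pow_le_pow_iff_right₀ (one_lt_two (α := ℝ))] at hle
        show X₁ ω ≤ x
        exact hk ▸ not_lt.1 (Nat.find_min hx (by omega : k < n))
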